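/- Let n ≥ 1, let W be an n×n real matrix, let M be a fixed matrix with entries in {0,1}, and let x ∈ ℝⁿ. Let M̂ be a random mask drawn from a probability distribution P over a finite set of n×n matrices with entries in {0,1}, such that for every M̂ in the support of P the Hadamard-masked matrix W⊙M̂ is invertible. For each M̂ define the reconstruction x̂(M̂) = (W⊙M̂)⁻¹ (W⊙M) x. Then the expected Euclidean reconstruction error satisfies 𝔼[‖x − x̂(M̂)‖] ≥ Σ_{M̂} P(M̂) · (σ_min(W⊙(M̂−M)) / σ_max(W⊙M̂)) · ‖x‖, where for a square real matrix A, σ_min(A) denotes inf over unit vectors v of ‖Av‖ and σ_max(A) denotes the operator norm of A with respect to the Euclidean norm. -/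

import Mathlib

open Matrix

/-- The Euclidean norm of a vector in `ℝⁿ`. -/
noncomputable def euclNorm {n : ℕ} (x : Fin n → ℝ) : ℝ :=
  Real.sqrt (∑ i, x i ^ 2)

/-- `σ_min(A) = inf_{‖v‖ = 1} ‖A v‖` (with respect to the Euclidean norm). -/
noncomputable def sigmaMin {n : ℕ} (A : Matrix (Fin n) (Fin n) ℝ) : ℝ :=
  ⨅ v : {v : Fin n → ℝ // euclNorm v = 1}, euclNorm (A *ᵥ (v : Fin n → ℝ))

/-- `σ_max(A) = sup_{‖v‖ = 1} ‖A v‖` (the Euclidean operator norm). -/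
noncomputable def sigmaMax {n : ℕ} (A : Matrix (Fin n) (Fin n) ℝ) : ℝ :=
  ⨆ v : {v : Fin n → ℝ // euclNorm v = 1}, euclNorm (A *ᵥ (v : Fin n → ℝ))

/-! The reconstruction error `e = x - (W ⊙ M̂)⁻¹ (W ⊙ M) x` satisfies `(W ⊙ M̂) e = (W ⊙ (M̂ - M)) x`,
so `σ_min(W ⊙ (M̂ - M)) ‖x‖ ≤ ‖(W ⊙ (M̂ - M)) x‖ = ‖(W ⊙ M̂) e‖ ≤ σ_max(W ⊙ M̂) ‖e‖`.
Dividing by `σ_max(W ⊙ M̂)` and averaging over `M̂` gives the bound. -/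

section EuclNorm

variable {n : ℕ}

lemma euclNorm_eq_norm_toLp (x : Fin n → ℝ) : euclNorm x = ‖WithLp.toLp 2 x‖ := by
  simp [EuclideanSpace.norm_eq, euclNorm]

lemma euclNorm_nonneg (x : Fin n → ℝ) : 0 ≤ euclNorm x :=
  Real.sqrt_nonneg _

@[simp]
lemma euclNorm_zero : euclNorm (0 : Fin n → ℝ) = 0 := by
  simp [euclNorm]

lemma euclNorm_smul (c : ℝ) (x : Fin n → ℝ) : euclNorm (c • x) = |c| * euclNorm x := by
  simp only [euclNorm_eq_norm_toLp, WithLp.toLp_smul, norm_smul, Real.norm_eq_abs]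

lemma euclNorm_pos {x : Fin n → ℝ} (hx : x ≠ 0) : 0 < euclNorm x := by
  rw [euclNorm_eq_norm_toLp, norm_pos_iff]
  exact fun h => hx (congrArg WithLp.ofLp h)

-- The witness is `u = x / ‖x‖`.
lemma exists_unit_euclNorm_mulVec_eq (A : Matrix (Fin n) (Fin n) ℝ) {x : Fin n → ℝ}
    (hx : x ≠ 0) :
    ∃ u : {v : Fin n → ℝ // euclNorm v = 1},
      euclNorm (A *ᵥ x) = euclNorm x * euclNorm (A *ᵥ (u : Fin n → ℝ)) := by
  have hpos := euclNorm_pos hx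
  refine ⟨⟨(euclNorm x)⁻¹ • x, ?_⟩, ?_⟩
  · rw [euclNorm_smul, abs_inv, abs_of_pos hpos, inv_mul_cancel₀ hpos.ne']
  · rw [mulVec_smul, euclNorm_smul, abs_inv, abs_of_pos hpos, mul_inv_cancel_left₀ hpos.ne']

end EuclNorm

section SingularValues

variable {n : ℕ} (A : Matrix (Fin n) (Fin n) ℝ)

lemma bddAbove_range_euclNorm_mulVec :
    BddAbove (Set.range fun v : {v : Fin n → ℝ // euclNorm v = 1} =>
      euclNorm (A *ᵥ (v : Fin n → ℝ))) := by
  refine ⟨‖toEuclideanCLM (𝕜 := ℝ) A‖, ?_⟩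
  rintro _ ⟨⟨v, hv⟩, rfl⟩
  have h := (toEuclideanCLM (𝕜 := ℝ) A).le_opNorm (WithLp.toLp 2 v)
  rwa [toEuclideanCLM_toLp, ← euclNorm_eq_norm_toLp, ← euclNorm_eq_norm_toLp, hv, mul_one] at h

lemma sigmaMax_nonneg : 0 ≤ sigmaMax A :=
  Real.iSup_nonneg fun _ => euclNorm_nonneg _

lemma euclNorm_mulVec_le_sigmaMax_mul (x : Fin n → ℝ) :
    euclNorm (A *ᵥ x) ≤ sigmaMax A * euclNorm x := by
  rcases eq_or_ne x 0 with rfl | hx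
  · simp
  obtain ⟨u, hu⟩ := exists_unit_euclNorm_mulVec_eq A hx
  rw [hu, mul_comm (sigmaMax A)]
  exact mul_le_mul_of_nonneg_left (le_ciSup (bddAbove_range_euclNorm_mulVec A) u)
    (euclNorm_nonneg x)

lemma sigmaMin_mul_le_euclNorm_mulVec (x : Fin n → ℝ) :
    sigmaMin A * euclNorm x ≤ euclNorm (A *ᵥ x) := by
  rcases eq_or_ne x 0 with rfl | hx
  · simp
  obtain ⟨u, hu⟩ := exists_unit_euclNorm_mulVec_eq A hx
  rw [hu, mul_comm]
  refine mul_le_mul_of_nonneg_left (ciInf_le ⟨0, ?_⟩ u) (euclNorm_nonneg x)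
  rintro _ ⟨v, rfl⟩
  exact euclNorm_nonneg _

lemma sigmaMin_div_sigmaMax_mul_le_of_mulVec_eq {B D : Matrix (Fin n) (Fin n) ℝ}
    {e x : Fin n → ℝ} (h : B *ᵥ e = D *ᵥ x) :
    sigmaMin D / sigmaMax B * euclNorm x ≤ euclNorm e := by
  rcases (sigmaMax_nonneg B).eq_or_lt with hB | hB
  · -- `σ_min(D) / 0 = 0`
    simp [← hB, euclNorm_nonneg]
  rw [div_mul_eq_mul_div, div_le_iff₀ hB, mul_comm (euclNorm e)]
  calc sigmaMin D * euclNorm x ≤ euclNorm (D *ᵥ x) := sigmaMin_mul_le_euclNorm_mulVec D x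
    _ = euclNorm (B *ᵥ e) := by rw [h]
    _ ≤ sigmaMax B * euclNorm e := euclNorm_mulVec_le_sigmaMax_mul B e

end SingularValues

lemma Matrix.hadamard_sub {m k α : Type*} [NonUnitalNonAssocRing α] (A B C : Matrix m k α) :
    A ⊙ (B - C) = A ⊙ B - A ⊙ C := by
  ext i j
  simp [mul_sub]

lemma Matrix.mulVec_sub_nonsing_inv_mulVec {m R : Type*} [Fintype m] [DecidableEq m]
    [CommRing R] {B : Matrix m m R} (hB : IsUnit B) (C : Matrix m m R) (x : m → R) :
    B *ᵥ (x - B⁻¹ *ᵥ (C *ᵥ x)) = (B - C) *ᵥ x := by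
  rw [mulVec_sub, mulVec_mulVec, mul_nonsing_inv B ((isUnit_iff_isUnit_det B).mp hB), one_mulVec,
    sub_mulVec]

theorem expected_reconstruction_error_lower_bound_general {n : ℕ}
    (W M : Matrix (Fin n) (Fin n) ℝ)
    (x : Fin n → ℝ)
    (masks : Finset (Matrix (Fin n) (Fin n) ℝ))
    (P : Matrix (Fin n) (Fin n) ℝ → ℝ)
    (hP0 : ∀ A ∈ masks, 0 ≤ P A)
    (hsupp : ∀ A ∈ masks, P A ≠ 0 → IsUnit (W ⊙ A)) :
    ∑ A ∈ masks, P A * euclNorm (x - (W ⊙ A)⁻¹ *ᵥ ((W ⊙ M) *ᵥ x)) ≥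
      ∑ A ∈ masks, P A * (sigmaMin (W ⊙ (A - M)) / sigmaMax (W ⊙ A)) * euclNorm x := by
  refine Finset.sum_le_sum fun A hA => ?_
  rcases eq_or_ne (P A) 0 with hPA | hPA
  · simp [hPA]
  rw [mul_assoc]
  refine mul_le_mul_of_nonneg_left (sigmaMin_div_sigmaMax_mul_le_of_mulVec_eq ?_) (hP0 A hA)
  rw [Matrix.hadamard_sub, Matrix.mulVec_sub_nonsing_inv_mulVec (hsupp A hA hPA)]

/-- **Theorem 1 of the paper.** Lower bound on the expected data
reconstruction error of an attacker who guesses a random mask `M̂ ∼ P` and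
reconstructs `x̂(M̂) = (W ⊙ M̂)⁻¹ (W ⊙ M) x`. -/
theorem expected_reconstruction_error_lower_bound {n : ℕ} (hn : 1 ≤ n)
    (W M : Matrix (Fin n) (Fin n) ℝ)
    (hM : ∀ i j, M i j = 0 ∨ M i j = 1)
    (x : Fin n → ℝ)
    (masks : Finset (Matrix (Fin n) (Fin n) ℝ))
    (hmasks : ∀ A ∈ masks, ∀ i j, A i j = 0 ∨ A i j = 1)
    (P : Matrix (Fin n) (Fin n) ℝ → ℝ)
    (hP0 : ∀ A ∈ masks, 0 ≤ P A)
    (hP1 : ∑ A ∈ masks, P A = 1)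
    (hsupp : ∀ A ∈ masks, P A ≠ 0 → IsUnit (W ⊙ A)) :
    ∑ A ∈ masks, P A * euclNorm (x - (W ⊙ A)⁻¹ *ᵥ ((W ⊙ M) *ᵥ x)) ≥
      ∑ A ∈ masks, P A * (sigmaMin (W ⊙ (A - M)) / sigmaMax (W ⊙ A)) * euclNorm x :=
  expected_reconstruction_error_lower_bound_general W M x masks P hP0 hsupp
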